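/- arXiv:1511.04291 — 3 statements merged into one kernel-verified Lean document; each statement's English description precedes it below -/
import Mathlib

section
/- Let A be a finite group acting on an abelian discrete p-toral group V. Then there exists N > 0 such that for all n ≥ N: (a) V = V₀ · Ω_n(V), where V₀ is the maximal divisible subgroup of V; and (b) the pointwise stabilizer of V in A equals the pointwise stabilizer of Ω_n(V) in A. -/
open scoped Pointwise

/-- The Prüfer `p`-group, realized as the `p`-power torsion of `ℚ/ℤ`. -/
def Prufer (p : ℕ) : AddSubgroup (AddCircle (1 : ℚ)) where
  carrier := {x | ∃ n : ℕ, (p ^ n : ℕ) • x = 0}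
  zero_mem' := ⟨0, smul_zero _⟩
  add_mem' := by
    rintro a b ⟨m, hm⟩ ⟨n, hn⟩
    refine ⟨m + n, ?_⟩
    have h1 : (p ^ (m + n) : ℕ) • a = 0 := by
      rw [show p ^ (m + n) = p ^ n * p ^ m by ring, mul_smul, hm, smul_zero]
    have h2 : (p ^ (m + n) : ℕ) • b = 0 := by
      rw [show p ^ (m + n) = p ^ m * p ^ n by ring, mul_smul, hn, smul_zero]
    rw [smul_add, h1, h2, add_zero]
  neg_mem' := by
    rintro a ⟨m, hm⟩
    exact ⟨m, by rw [smul_neg, hm, neg_zero]⟩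

/-- `T` is a discrete `p`-torus: isomorphic to a finite direct power of the Prüfer `p`-group. -/
def IsPTorus (p : ℕ) (T : Type*) [Group T] : Prop :=
  ∃ r : ℕ, Nonempty (T ≃* Multiplicative (Fin r → Prufer p))

/-- `G` is a discrete `p`-toral group: it has a normal discrete `p`-torus of `p`-power index. -/
def IsDiscretePToral (p : ℕ) (G : Type*) [Group G] : Prop :=
  ∃ T : Subgroup G, T.Normal ∧ IsPTorus p ↥T ∧ ∃ k : ℕ, Nat.card (G ⧸ T) = p ^ k

/-- `G` is a virtually discrete `p`-toral group: it has a normal discrete `p`-torus of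
finite index. -/
def IsVirtuallyDiscretePToral (p : ℕ) (G : Type*) [Group G] : Prop :=
  ∃ T : Subgroup G, T.Normal ∧ IsPTorus p ↥T ∧ Finite (G ⧸ T)

/-- A subgroup is discrete `p`-toral. -/
def IsDiscretePToralSubgroup (p : ℕ) {G : Type*} [Group G] (H : Subgroup G) : Prop :=
  IsDiscretePToral p ↥H

/-- A Sylow `p`-subgroup of a virtually discrete `p`-toral group:
a maximal discrete `p`-toral subgroup. -/
def IsMaxDiscretePToralSubgroup (p : ℕ) {G : Type*} [Group G] (S : Subgroup G) : Prop :=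
  IsDiscretePToralSubgroup p S ∧
    ∀ P : Subgroup G, IsDiscretePToralSubgroup p P → S ≤ P → P = S

/-- The identity component `Γ₀`: the (unique maximal) discrete `p`-torus subgroup,
realized as the subgroup generated by all discrete `p`-torus subgroups. -/
def identityComponent (p : ℕ) (G : Type*) [Group G] : Subgroup G :=
  ⨆ T ∈ {T : Subgroup G | IsPTorus p ↥T}, T

/-- `Ω_n(D)`: the subgroup of elements of order dividing `p ^ n`. -/
def Omega (p n : ℕ) (D : Type*) [CommGroup D] : Subgroup D where
  carrier := {x | x ^ p ^ n = 1}
  one_mem' := one_pow _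
  mul_mem' := by
    intro a b ha hb
    simp only [Set.mem_setOf_eq] at *
    rw [mul_pow, ha, hb, one_mul]
  inv_mem' := by
    intro a ha
    simp only [Set.mem_setOf_eq] at *
    rw [inv_pow, ha, inv_one]

/-- `D₀` is the maximal divisible subgroup of `D`. -/
def IsMaxDivisible {D : Type*} [CommGroup D] (D₀ : Subgroup D) : Prop :=
  (∀ x ∈ D₀, ∀ n : ℕ, n ≠ 0 → ∃ y ∈ D₀, y ^ n = x) ∧
    ∀ E : Subgroup D, (∀ x ∈ E, ∀ n : ℕ, n ≠ 0 → ∃ y ∈ E, y ^ n = x) → E ≤ D₀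

/-- The subgroup of points of `D` fixed by every element of `A ⊆ G`. -/
def fixedSub (G : Type*) [Group G] (D : Type*) [Group D] [MulDistribMulAction G D]
    (A : Set G) : Subgroup D where
  carrier := {x | ∀ a ∈ A, a • x = x}
  one_mem' := fun a _ => smul_one a
  mul_mem' := by
    intro x y hx hy a ha
    rw [smul_mul', hx a ha, hy a ha]
  inv_mem' := by
    intro x hx a ha
    rw [smul_inv', hx a ha]

/-- The commutator `[W, A]` of a subgroup `W ≤ D` with a set `A ⊆ G` acting on `D`. -/
def actComm (G : Type*) [Group G] {D : Type*} [Group D] [MulDistribMulAction G D]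
    (A : Set G) (W : Subgroup D) : Subgroup D :=
  Subgroup.closure {x | ∃ w ∈ W, ∃ a ∈ A, x = w⁻¹ * a • w}

/-- `R` is a set of representatives for the (left) cosets of `H` inside `K`. -/
def IsRelTransversal {G : Type*} [Group G] (H K : Subgroup G) (R : Finset G) : Prop :=
  (↑R : Set G) ⊆ (K : Set G) ∧ ∀ g ∈ K, ∃! r, r ∈ R ∧ r⁻¹ * g ∈ H

/-- `A` is an offender of `G` on `D` (relative to the identity component `D₀`). -/
def IsOffender (p : ℕ) {G D : Type*} [Group G] [CommGroup D] [MulDistribMulAction G D]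
    (D₀ : Subgroup D) (A : Subgroup G) : Prop :=
  IsPGroup p ↥A ∧ (∀ x ∈ A, ∀ y ∈ A, x * y = y * x) ∧
    D₀ ≤ fixedSub G D (A : Set G) ∧
    (fixedSub G D (A : Set G)).index ≠ 0 ∧
    (fixedSub G D (A : Set G)).index ≤ Nat.card A

/-- `A` is a best offender of `G` on `D` (relative to the identity component `D₀`). -/
def IsBestOffender (p : ℕ) {G D : Type*} [Group G] [CommGroup D] [MulDistribMulAction G D]
    (D₀ : Subgroup D) (A : Subgroup G) : Prop :=
  IsPGroup p ↥A ∧ (∀ x ∈ A, ∀ y ∈ A, x * y = y * x) ∧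
    D₀ ≤ fixedSub G D (A : Set G) ∧
    ∀ B : Subgroup G, B ≤ A →
      Nat.card B * D₀.relIndex (fixedSub G D (B : Set G)) ≤
        Nat.card A * D₀.relIndex (fixedSub G D (A : Set G))

/-- `A` is an over-offender of `G` on `D`. -/
def IsOverOffender (p : ℕ) {G D : Type*} [Group G] [CommGroup D] [MulDistribMulAction G D]
    (D₀ : Subgroup D) (A : Subgroup G) : Prop :=
  IsBestOffender p D₀ A ∧
    D₀.index < Nat.card A * D₀.relIndex (fixedSub G D (A : Set G))

/-- `A` is a best offender of `G` on the invariant subgroup `W ≤ D` with identity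
component `W₀`. -/
def IsBestOffenderOn (p : ℕ) {G D : Type*} [Group G] [CommGroup D] [MulDistribMulAction G D]
    (W₀ W : Subgroup D) (A : Subgroup G) : Prop :=
  IsPGroup p ↥A ∧ (∀ x ∈ A, ∀ y ∈ A, x * y = y * x) ∧
    W₀ ≤ W ⊓ fixedSub G D (A : Set G) ∧
    ∀ B : Subgroup G, B ≤ A →
      Nat.card B * W₀.relIndex (W ⊓ fixedSub G D (B : Set G)) ≤
        Nat.card A * W₀.relIndex (W ⊓ fixedSub G D (A : Set G))

/-- `A` is an over-offender of `G` on the invariant subgroup `W ≤ D` with identity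
component `W₀`. -/
def IsOverOffenderOn (p : ℕ) {G D : Type*} [Group G] [CommGroup D] [MulDistribMulAction G D]
    (W₀ W : Subgroup D) (A : Subgroup G) : Prop :=
  IsBestOffenderOn p W₀ W A ∧
    W₀.relIndex W < Nat.card A * W₀.relIndex (W ⊓ fixedSub G D (A : Set G))

/-! The torus `T ≤ V` is divisible, hence contained in `V₀`, and `V/T` has exponent dividing
`p^k`; so for `n ≥ k` every `v` has `v^(p^n) ∈ V₀`, and dividing out a `p^n`-th root of it in
`V₀` leaves an element of `Ω_n(V)`. Being a `p`-group, `V` is the increasing union of the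
`Ω_n(V)`, so each of the finitely many elements of `A` acting nontrivially already moves a point
of some `Ω_n(V)`, and one `N` works for all of them. -/

theorem exists_nsmul_eq_of_coprime {G : Type*} [AddCommGroup G] {k m : ℕ} (hkm : k.Coprime m)
    {z : G} (hz : k • z = 0) : ∃ y, m • y = z ∧ k • y = 0 := by
  obtain ⟨u, v, huv⟩ := Nat.isCoprime_iff_coprime.mpr hkm.symm
  refine ⟨u • z, ?_, by rw [smul_comm, hz, smul_zero]⟩
  have hkz : (k : ℤ) • z = 0 := by rw [natCast_zsmul, hz]
  calc m • u • z = (u * m + v * k) • z := by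
        rw [add_smul, mul_smul v, hkz, smul_zero, add_zero, mul_comm, mul_smul, natCast_zsmul]
    _ = z := by rw [huv, one_smul]

namespace Prufer

/-- Divide by the `p`-part of `n` in `ℚ/ℤ`, then by the prime-to-`p` part, which is invertible
modulo the order of what is being divided. -/
theorem exists_nsmul_eq {p : ℕ} (hp : p.Prime) (x : Prufer p) {n : ℕ} (hn : n ≠ 0) :
    ∃ y : Prufer p, n • y = x := by
  obtain ⟨x, s, hs⟩ := x
  set a := n.factorization p
  obtain ⟨z, hz⟩ : ∃ z : AddCircle (1 : ℚ), (p ^ a : ℕ) • z = x :=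
    ⟨_, by
      rw [← natCast_zsmul]
      exact DivisibleBy.div_cancel x (Int.natCast_ne_zero.mpr (pow_ne_zero a hp.ne_zero))⟩
  obtain ⟨y, hyz, hy⟩ := exists_nsmul_eq_of_coprime
    ((Nat.coprime_ordCompl hp hn).pow_left (s + a)) (z := z)
    (by rw [pow_add, mul_nsmul', hz, hs])
  refine ⟨⟨y, s + a, hy⟩, Subtype.ext ?_⟩
  change n • y = x
  rw [← Nat.ordProj_mul_ordCompl_eq_self n p, mul_nsmul', hyz, hz]

theorem isPGroup_multiplicative (p : ℕ) : IsPGroup p (Multiplicative (Prufer p)) :=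
  fun ⟨_, s, hs⟩ => ⟨s, Subtype.ext hs⟩

end Prufer

theorem IsPGroup.pi {p : ℕ} {ι : Type*} [Finite ι] {G : ι → Type*} [∀ i, Group (G i)]
    (h : ∀ i, IsPGroup p (G i)) : IsPGroup p (∀ i, G i) := by
  intro g
  choose k hk using fun i => h i (g i)
  obtain ⟨K, hK⟩ := (Set.finite_range k).bddAbove
  refine ⟨K, funext fun i => ?_⟩
  rw [Pi.pow_apply, ← pow_mul_pow_sub p (hK ⟨i, rfl⟩), pow_mul, hk, one_pow, Pi.one_apply]

theorem IsPGroup.of_quotient {p : ℕ} {G : Type*} [Group G] {N : Subgroup G} [N.Normal]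
    (hN : IsPGroup p N) (hQ : IsPGroup p (G ⧸ N)) : IsPGroup p G := by
  intro g
  obtain ⟨i, hi⟩ := hQ g
  rw [← QuotientGroup.mk_pow, QuotientGroup.eq_one_iff] at hi
  obtain ⟨j, hj⟩ := hN ⟨_, hi⟩
  exact ⟨i + j, by rw [pow_add, pow_mul]; exact congrArg Subtype.val hj⟩

namespace IsPTorus

variable {p : ℕ} {T : Type*} [Group T]

theorem exists_pow_eq (hp : p.Prime) (hT : IsPTorus p T) (x : T) {n : ℕ} (hn : n ≠ 0) :
    ∃ y : T, y ^ n = x := by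
  obtain ⟨r, ⟨e⟩⟩ := hT
  choose f hf using fun i => Prufer.exists_nsmul_eq hp ((e x).toAdd i) hn
  refine ⟨e.symm (.ofAdd f), e.injective ?_⟩
  rw [map_pow, MulEquiv.apply_symm_apply, ← ofAdd_nsmul]
  exact congrArg Multiplicative.ofAdd (funext hf)

theorem isPGroup (hT : IsPTorus p T) : IsPGroup p T := by
  obtain ⟨r, ⟨e⟩⟩ := hT
  exact (IsPGroup.pi fun _ => Prufer.isPGroup_multiplicative p).of_equiv
    ((MulEquiv.piMultiplicative _).symm.trans e.symm)

end IsPTorus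

section Omega

variable (p : ℕ) (D : Type*) [CommGroup D]

theorem omega_mono : Monotone fun n => Omega p n D := fun m n hmn x (hx : x ^ p ^ m = 1) => by
  change x ^ p ^ n = 1
  rw [← pow_mul_pow_sub p hmn, pow_mul, hx, one_pow]

variable {p D}

theorem mul_omega_eq_univ {n : ℕ} (hp : p ≠ 0) {D₀ : Subgroup D}
    (hdiv : ∀ x ∈ D₀, ∀ n : ℕ, n ≠ 0 → ∃ y ∈ D₀, y ^ n = x) (hpow : ∀ v : D, v ^ p ^ n ∈ D₀) :
    (D₀ : Set D) * (Omega p n D : Set D) = Set.univ := by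
  refine Set.eq_univ_of_forall fun v => ?_
  obtain ⟨v₀, hv₀, hv₀v⟩ := hdiv _ (hpow v) (p ^ n) (pow_ne_zero n hp)
  have hw : v₀⁻¹ * v ∈ Omega p n D := by
    change (v₀⁻¹ * v) ^ p ^ n = 1
    rw [mul_pow, inv_pow, hv₀v, inv_mul_cancel]
  exact Set.mem_mul.mpr ⟨v₀, hv₀, v₀⁻¹ * v, hw, mul_inv_cancel_left v₀ v⟩

theorem exists_forall_omega_smul_eq_iff {A : Type*} [Finite A] [SMul A D] (hD : IsPGroup p D) :
    ∃ N, ∀ n ≥ N, ∀ a : A, (∀ v ∈ Omega p n D, a • v = v) ↔ ∀ v : D, a • v = v := by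
  have hwitness : ∀ a : A, ∃ m, (∀ v ∈ Omega p m D, a • v = v) → ∀ v : D, a • v = v := by
    intro a
    by_cases ha : ∀ v : D, a • v = v
    · exact ⟨0, fun _ => ha⟩
    · obtain ⟨v, hv⟩ := not_forall.mp ha
      obtain ⟨m, hm⟩ := hD v
      exact ⟨m, fun hfix => absurd (hfix v hm) hv⟩
  choose m hm using hwitness
  obtain ⟨N, hN⟩ := (Set.finite_range m).bddAbove
  exact ⟨N, fun n hn a => ⟨fun hfix => hm a fun v hv =>
    hfix v (omega_mono p D ((hN ⟨a, rfl⟩).trans hn) hv), fun h v _ => h v⟩⟩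

end Omega

/-- If a finite group `A` acts on an abelian discrete `p`-toral group
`V`, then for all sufficiently large `n`: (a) `V = V₀ · Ω_n(V)` where `V₀` is the
maximal divisible subgroup; (b) the pointwise stabilizer in `A` of `V` equals that of
`Ω_n(V)`. -/
theorem exists_omega_generates_and_same_kernel (p : ℕ) (hp : p.Prime)
    (A V : Type*) [Group A] [Finite A] [CommGroup V] [MulDistribMulAction A V]
    (hV : IsDiscretePToral p V) (V₀ : Subgroup V) (hV₀ : IsMaxDivisible V₀) :
    ∃ N : ℕ, 0 < N ∧ ∀ n ≥ N,
      ((V₀ : Set V) * (Omega p n V : Set V) = Set.univ) ∧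
      (∀ a : A, (∀ v ∈ Omega p n V, a • v = v) ↔ ∀ v : V, a • v = v) := by
  obtain ⟨T, -, hT, k, hk⟩ := hV
  have hTV₀ : T ≤ V₀ := hV₀.2 T fun x hx n hn => by
    obtain ⟨y, hy⟩ := hT.exists_pow_eq hp ⟨x, hx⟩ hn
    exact ⟨y, y.2, congrArg Subtype.val hy⟩
  have hpowT (v : V) : v ^ p ^ k ∈ T := by
    rw [← QuotientGroup.eq_one_iff, QuotientGroup.mk_pow, ← hk]
    exact pow_card_eq_one'
  obtain ⟨N, hN⟩ := exists_forall_omega_smul_eq_iff (A := A)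
    (hT.isPGroup.of_quotient (IsPGroup.of_card hk))
  refine ⟨N + k + 1, by omega, fun n hn => ⟨mul_omega_eq_univ hp.ne_zero hV₀.1 fun v => ?_,
    hN n (by omega)⟩⟩
  rw [← pow_mul_pow_sub p (show k ≤ n by omega), pow_mul]
  exact pow_mem (hTV₀ (hpowT v)) _
end

section
/- Let A be a finite 2-group acting quadratically on an elementary abelian 2-group V (i.e., [V,A,A]=1), and let A₀ ≤ A be a subgroup of index at least 4. Then the norm map N_{A₀}^A is identically 1 on C_V(A₀). -/
open scoped Pointwise

/-! Quadratic action makes `f a = v⁻¹ * a • v` a homomorphism `A →* V` that kills `A₀`, so the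
norm of `v` is `v ^ |A : A₀|` times the product of `f` over representatives of `A ⧸ A₀`. Since `A`
is a `2`-group there is `A₀ ≤ L` with `|L : A₀| = 2`; taking the representatives of `A ⧸ A₀` to be
products `x * y` of representatives of `A ⧸ L` and `L ⧸ A₀`, the product of `f` becomes a
`|L : A₀|`-th power times an `|A : L|`-th power. All three exponents are even because
`|A : A₀| ≥ 4` is a power of `2`, and `V` has exponent `2`. -/

section QuadraticAction

variable {G V : Type*} [Group G] [Group V] [MulDistribMulAction G V]

lemma smul_inv_mul_smul_of_quadratic
    (hquad : actComm G Set.univ (actComm G Set.univ (⊤ : Subgroup V)) = ⊥) (v : V) (a b : G) :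
    a • (v⁻¹ * b • v) = v⁻¹ * b • v := by
  have hvb : v⁻¹ * b • v ∈ actComm G Set.univ (⊤ : Subgroup V) :=
    Subgroup.subset_closure ⟨v, Subgroup.mem_top v, b, Set.mem_univ b, rfl⟩
  have hmem : (v⁻¹ * b • v)⁻¹ * a • (v⁻¹ * b • v) ∈
      actComm G Set.univ (actComm G Set.univ (⊤ : Subgroup V)) :=
    Subgroup.subset_closure ⟨_, hvb, a, Set.mem_univ a, rfl⟩
  rw [hquad, Subgroup.mem_bot, inv_mul_eq_one] at hmem
  exact hmem.symm

def commutatorHom (v : V) (hv : ∀ a b : G, a • (v⁻¹ * b • v) = v⁻¹ * b • v) : G →* V :=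
  MonoidHom.mk' (fun a => v⁻¹ * a • v) fun a b => by
    conv_lhs => rw [mul_smul, ← mul_inv_cancel_left v (b • v), smul_mul', hv]
    group

lemma commutatorHom_apply (v : V) (hv : ∀ a b : G, a • (v⁻¹ * b • v) = v⁻¹ * b • v) (a : G) :
    commutatorHom v hv a = v⁻¹ * a • v :=
  rfl

end QuadraticAction

lemma IsRelTransversal.prod_eq_prod_out {G M : Type*} [Group G] [CommMonoid M] {H : Subgroup G} [Fintype (G ⧸ H)] {R : Finset G}
    (hR : IsRelTransversal H ⊤ R) {φ : G → M} (hφ : ∀ g, ∀ h ∈ H, φ (g * h) = φ g) :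
    ∏ r ∈ R, φ r = ∏ c : G ⧸ H, φ c.out := by
  have hunique : ∀ r₁ ∈ R, ∀ r₂ ∈ R, (r₁ : G ⧸ H) = r₂ → r₁ = r₂ := by
    intro r₁ h₁ r₂ h₂ h
    obtain ⟨r, -, hr⟩ := hR.2 r₂ (Subgroup.mem_top r₂)
    rw [hr r₁ ⟨h₁, QuotientGroup.eq.mp h⟩, hr r₂ ⟨h₂, by simp [H.one_mem]⟩]
  refine Finset.prod_bij (fun r _ => (r : G ⧸ H)) (fun _ _ => Finset.mem_univ _) hunique ?_ ?_
  · intro c _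
    obtain ⟨g, rfl⟩ := QuotientGroup.mk_surjective c
    obtain ⟨r, ⟨hrR, hrg⟩, -⟩ := hR.2 g (Subgroup.mem_top g)
    exact ⟨r, hrR, QuotientGroup.eq.mpr hrg⟩
  · intro r _
    obtain ⟨h, hh⟩ := QuotientGroup.mk_out_eq_mul H r
    rw [hh, hφ r h h.2]

lemma MonoidHom.map_out_eq {G M : Type*} [Group G] [Monoid M] {H : Subgroup G} (f : G →* M)
    (hf : ∀ h ∈ H, f h = 1) (g : G) : f (g : G ⧸ H).out = f g := by
  obtain ⟨h, hh⟩ := QuotientGroup.mk_out_eq_mul H g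
  rw [hh, map_mul, hf h h.2, mul_one]

lemma MonoidHom.prod_map_out_eq_of_le {G M : Type*} [Group G] [CommMonoid M] {H L : Subgroup G}
    (hHL : H ≤ L) [Fintype (G ⧸ H)] [Fintype (G ⧸ L)] [Fintype (L ⧸ H.subgroupOf L)]
    (f : G →* M) (hf : ∀ h ∈ H, f h = 1) :
    ∏ c : G ⧸ H, f c.out =
      (∏ x : G ⧸ L, f x.out) ^ H.relIndex L * (∏ y : L ⧸ H.subgroupOf L, f y.out) ^ L.index := by
  have hsplit : ∀ x : G ⧸ L, ∀ y : L ⧸ H.subgroupOf L,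
      f ((Subgroup.quotientEquivProdOfLE hHL).symm (x, y)).out = f x.out * f y.out := by
    intro x y
    induction y using QuotientGroup.induction_on with
    | H b =>
      have hfL : ∀ h ∈ H.subgroupOf L, (f.comp L.subtype) h = 1 := fun h hh => hf h hh
      have hy : f ((b : L ⧸ H.subgroupOf L).out : G) = f b := (f.comp L.subtype).map_out_eq hfL b
      rw [hy]
      exact (f.map_out_eq hf _).trans (map_mul f _ _)
  rw [← (Subgroup.quotientEquivProdOfLE hHL).symm.prod_comp, Fintype.prod_prod_type]
  simp only [hsplit, Finset.prod_mul_distrib, Finset.prod_const, Finset.card_univ, Finset.prod_pow]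
  rw [Subgroup.relIndex, Subgroup.index_eq_card, Subgroup.index_eq_card, Nat.card_eq_fintype_card,
    Nat.card_eq_fintype_card]

lemma IsPGroup.exists_le_relIndex_eq {p : ℕ} [Fact p.Prime] {G : Type*} [Group G] [Finite G]
    (hG : IsPGroup p G) {H : Subgroup G} (hH : H ≠ ⊤) : ∃ L, H ≤ L ∧ H.relIndex L = p := by
  obtain ⟨n, hn⟩ := IsPGroup.iff_card.mp (hG.to_subgroup H)
  obtain ⟨k, hk⟩ := hG.index H
  have hk0 : k ≠ 0 := by
    rintro rfl
    exact hH (Subgroup.index_eq_one.mp hk)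
  have hdvd : p ^ (n + 1) ∣ Nat.card G := by
    rw [← H.card_mul_index, hn, hk, pow_succ]
    exact mul_dvd_mul_left _ (dvd_pow_self p hk0)
  obtain ⟨L, hL, hHL⟩ := Sylow.exists_subgroup_card_pow_prime_le p hdvd H hn n.le_succ
  refine ⟨L, hHL, ?_⟩
  have hcard : Nat.card H * (H.relIndex L * L.index) = Nat.card H * p * L.index := by
    rw [Subgroup.relIndex_mul_index hHL, H.card_mul_index, ← L.card_mul_index, hL, hn, pow_succ]
  have hpos : 0 < Nat.card H * L.index := Nat.pos_of_ne_zero <|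
    mul_ne_zero Nat.card_pos.ne' L.index_ne_zero_of_finite
  exact Nat.eq_of_mul_eq_mul_left hpos (by linear_combination hcard)

/-- Let `A` be a finite `2`-group acting quadratically on an
elementary abelian `2`-group `V` and `A₀ ≤ A` of index at least `4`.  Then the norm
map `N_{A₀}^A` is identically `1` on `C_V(A₀)`. -/
theorem norm_eq_one_of_index_four_quadratic {A V : Type*} [Group A] [Finite A]
    [CommGroup V] [MulDistribMulAction A V]
    (hA : IsPGroup 2 A) (helem : ∀ v : V, v ^ 2 = 1)
    (hquad : actComm A Set.univ (actComm A Set.univ (⊤ : Subgroup V)) = ⊥)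
    (A₀ : Subgroup A) (hidx : 4 ≤ A₀.index)
    (R : Finset A) (hR : IsRelTransversal A₀ ⊤ R)
    (v : V) (hv : ∀ a ∈ A₀, a • v = v) :
    ∏ r ∈ R, r • v = 1 := by
  classical
  have := Fintype.ofFinite A
  have : Fact (Nat.Prime 2) := ⟨Nat.prime_two⟩
  have hpow : ∀ w : V, ∀ n, 2 ∣ n → w ^ n = 1 := fun w _ ⟨k, hk⟩ => by
    rw [hk, pow_mul, helem, one_pow]
  let f := commutatorHom v (smul_inv_mul_smul_of_quadratic hquad v)
  have hf₀ : ∀ a ∈ A₀, f a = 1 := fun a ha => by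
    rw [commutatorHom_apply, hv a ha, inv_mul_cancel]
  obtain ⟨L, hA₀L, hrel⟩ := hA.exists_le_relIndex_eq (H := A₀) (by rintro rfl; simp at hidx)
  have hA₀_index : A₀.index = 2 * L.index := by rw [← hrel, A₀.relIndex_mul_index hA₀L]
  have hL_index : 2 ∣ L.index := by
    obtain ⟨j, hj⟩ := hA.index L
    rcases j with _ | j
    · omega
    · exact hj ▸ dvd_pow_self 2 j.succ_ne_zero
  calc ∏ r ∈ R, r • v
      = ∏ c : A ⧸ A₀, c.out • v := hR.prod_eq_prod_out fun g h hh => by rw [mul_smul, hv h hh]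
    _ = ∏ c : A ⧸ A₀, v * f c.out := by simp only [f, commutatorHom_apply, mul_inv_cancel_left]
    _ = v ^ A₀.index *
          ((∏ x : A ⧸ L, f x.out) ^ 2 * (∏ y : L ⧸ A₀.subgroupOf L, f y.out) ^ L.index) := by
      rw [Finset.prod_mul_distrib, Finset.prod_const, Finset.card_univ, ← Nat.card_eq_fintype_card,
        ← Subgroup.index_eq_card, f.prod_map_out_eq_of_le hA₀L hf₀, hrel]
    _ = 1 := by
      rw [hpow v _ (hA₀_index ▸ dvd_mul_right 2 _), hpow _ 2 dvd_rfl, hpow _ _ hL_index, mul_one,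
        mul_one]
end

section
/- Let G be a finite group acting faithfully on an abelian discrete 2-toral group D with no over-offenders, and let A, B be best offenders of order 2 on D with [A,B] ≠ 1. Then L := ⟨A,B⟩ is isomorphic to the symmetric group S₃, the commutator subgroup [D,L] is elementary abelian of order 4, and D = [D,L] × C_D(L). -/
open scoped Pointwise

/-!
Since `D₀` has finite index, a best offender `⟨a⟩` of order two admitting no over-offender has
`|D : C_D(a)| = 2`, so `a` acts as a transvection `d ↦ d` or `d ↦ d * za` with a centre `za` of
order two fixed by `a`; likewise for `b` with centre `zb`. If `b` fixed `za`, then either `a` fixes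
`zb` and `a`, `b` commute, or `c = (b a)²` is a transvection with centre `za` fixing `C_D(b)`, and
the four-group `⟨b, c⟩` would be an over-offender. Hence `b • za = za zb` and `a • zb = zb za`,
which forces `(a b)³ = 1`. Then `[D, L] = ⟨za, zb⟩`, every `d ∈ D` is moved into `C_D(L)` by an
element of `⟨za, zb⟩`, and `L` acts faithfully on the three involutions of `[D, L]` through elements
of orders `2` and `3`, so `L ≅ S₃`.
-/

theorem exists_nsmul_eq_of_pow_nsmul_eq_zero {A : Type*} [AddCommGroup A] [DivisibleBy A ℤ]
    {p : ℕ} (hp : p.Prime) {x : A} {e : ℕ} (hx : p ^ e • x = 0) {n : ℕ} (hn : n ≠ 0) :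
    ∃ y : A, (∃ f : ℕ, p ^ f • y = 0) ∧ n • y = x := by
  obtain ⟨j, m, hpm, rfl⟩ := Nat.exists_eq_pow_mul_and_not_dvd hn p hp.ne_one
  obtain ⟨u, v, huv⟩ : IsCoprime (m : ℤ) ((p ^ e : ℕ) : ℤ) :=
    Nat.isCoprime_iff_coprime.mpr ((hp.coprime_iff_not_dvd.mpr hpm).symm.pow_right e)
  -- `u • x` is an `m`-th root of `x` still killed by `p ^ e`; it remains to divide it by `p ^ j`
  have hx' : m • u • x = x := by
    calc m • u • x = (u * m + v * (p ^ e : ℕ)) • x - v • (p ^ e • x) := by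
          rw [add_smul, mul_smul, mul_smul, natCast_zsmul, natCast_zsmul, smul_comm]; abel
      _ = x := by rw [huv, hx, one_smul, smul_zero, sub_zero]
  set y := DivisibleBy.div (u • x) ((p ^ j : ℕ) : ℤ)
  have hy : p ^ j • y = u • x := by
    rw [← natCast_zsmul]
    exact DivisibleBy.div_cancel _ (by exact_mod_cast (pow_pos hp.pos j).ne')
  refine ⟨y, ⟨e + j, ?_⟩, ?_⟩
  · rw [pow_add, mul_smul, hy, smul_comm, hx, smul_zero]
  · rw [mul_comm, mul_smul, hy, hx']

theorem Prufer.exists_nsmul_eq_s13 {p : ℕ} (hp : p.Prime) {x : AddCircle (1 : ℚ)}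
    (hx : x ∈ Prufer p) {n : ℕ} (hn : n ≠ 0) : ∃ y ∈ Prufer p, n • y = x := by
  obtain ⟨e, he⟩ := hx
  exact exists_nsmul_eq_of_pow_nsmul_eq_zero hp he hn

theorem IsPTorus.exists_pow_eq_s13 {p : ℕ} (hp : p.Prime) {T : Type*} [Group T] (hT : IsPTorus p T)
    (x : T) {n : ℕ} (hn : n ≠ 0) : ∃ y : T, y ^ n = x := by
  obtain ⟨r, ⟨e⟩⟩ := hT
  choose v hv using fun i => Prufer.exists_nsmul_eq_s13 hp (e x i).2 hn
  refine ⟨e.symm (Multiplicative.ofAdd fun i => ⟨v i, (hv i).1⟩), ?_⟩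
  rw [← map_pow, ← ofAdd_nsmul, MulEquiv.symm_apply_eq]
  ext i
  exact (hv i).2

theorem IsDiscretePToral.index_ne_zero {p : ℕ} (hp : p.Prime) {D : Type*} [CommGroup D]
    (hD : IsDiscretePToral p D) {D₀ : Subgroup D} (hD₀ : IsMaxDivisible D₀) : D₀.index ≠ 0 := by
  obtain ⟨T, -, hT, k, hk⟩ := hD
  have hTD₀ : T ≤ D₀ := hD₀.2 T fun x hx n hn => by
    obtain ⟨y, hy⟩ := hT.exists_pow_eq_s13 hp ⟨x, hx⟩ hn
    exact ⟨y, y.2, congrArg Subtype.val hy⟩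
  intro h
  have := Subgroup.index_dvd_of_le hTD₀
  rw [h, zero_dvd_iff, Subgroup.index, hk] at this
  exact pow_ne_zero k hp.ne_zero this

section FixedPoints

variable {G D : Type*} [Group G] [CommGroup D] [MulDistribMulAction G D]

theorem fixedSub_antitone {S T : Set G} (h : S ⊆ T) : fixedSub G D T ≤ fixedSub G D S :=
  fun _ hx g hg => hx g (h hg)

theorem fixedSub_closure (S : Set G) : fixedSub G D (Subgroup.closure S) = fixedSub G D S :=
  le_antisymm (fixedSub_antitone Subgroup.subset_closure) fun x hx _ hg =>
    (Subgroup.closure_le (MulAction.stabilizer G x)).mpr hx hg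

theorem fixedSub_zpowers (g : G) : fixedSub G D (Subgroup.zpowers g) = fixedSub G D {g} := by
  rw [Subgroup.zpowers_eq_closure, fixedSub_closure]

theorem mem_fixedSub_pair {g h : G} {x : D} :
    x ∈ fixedSub G D {g, h} ↔ g • x = x ∧ h • x = x := by
  simp [fixedSub]

theorem eq_one_of_fixedSub_eq_top [FaithfulSMul G D] {g : G} (h : fixedSub G D {g} = ⊤) :
    g = 1 :=
  FaithfulSMul.eq_of_smul_eq_smul fun x => by
    rw [one_smul]
    exact (Subgroup.eq_top_iff' _).mp h x g rfl

theorem actComm_closure_le {S : Set G} {V : Subgroup D}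
    (hS : ∀ g ∈ S, ∀ d : D, d⁻¹ * g • d ∈ V) : actComm G (Subgroup.closure S) ⊤ ≤ V := by
  refine (Subgroup.closure_le V).mpr ?_
  rintro _ ⟨d, -, g, hg, rfl⟩
  induction hg using Subgroup.closure_induction generalizing d with
  | mem g hg => exact hS g hg d
  | one => simp
  | mul x y _ _ hx hy =>
    have h := mul_mem (hy d) (hx (y • d))
    rwa [mul_assoc, mul_inv_cancel_left, ← mul_smul] at h
  | inv x _ hx =>
    have h := inv_mem (hx (x⁻¹ • d))
    rwa [smul_inv_smul, mul_inv_rev, inv_inv] at h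

end FixedPoints

section Offenders

variable {p : ℕ} {G D : Type*} [Group G] [CommGroup D] [MulDistribMulAction G D]
  {D₀ : Subgroup D}

theorem IsBestOffender.card_mul_relIndex_eq {A : Subgroup G} (hA : IsBestOffender p D₀ A)
    (hno : ¬ IsOverOffender p D₀ A) :
    Nat.card A * D₀.relIndex (fixedSub G D A) = D₀.index := by
  refine le_antisymm (not_lt.mp fun h => hno ⟨hA, h⟩) ?_
  have h := hA.2.2.2 ⊥ bot_le
  have hbot : fixedSub G D ((⊥ : Subgroup G) : Set G) = ⊤ :=
    eq_top_iff.mpr fun x _ g hg => by rw [(Subgroup.mem_bot).mp hg, one_smul]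
  rwa [hbot, Subgroup.card_bot, Subgroup.relIndex_top_right, one_mul] at h

theorem IsBestOffender.index_fixedSub_eq_card {A : Subgroup G} (hA : IsBestOffender p D₀ A)
    (hno : ¬ IsOverOffender p D₀ A) (hD₀ : D₀.index ≠ 0) :
    (fixedSub G D A).index = Nat.card A := by
  have h := Subgroup.relIndex_mul_index hA.2.2.1
  rw [← hA.card_mul_relIndex_eq hno, mul_comm] at h
  exact Nat.eq_of_mul_eq_mul_right
    (Nat.pos_of_ne_zero (mt Subgroup.index_eq_zero_of_relIndex_eq_zero hD₀)) h

theorem IsBestOffender.le_fixedSub_and_index_eq_card {g : G}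
    (hA : IsBestOffender p D₀ (Subgroup.zpowers g))
    (hno : ¬ IsOverOffender p D₀ (Subgroup.zpowers g)) (hD₀ : D₀.index ≠ 0) :
    D₀ ≤ fixedSub G D {g} ∧ (fixedSub G D {g}).index = Nat.card (Subgroup.zpowers g) := by
  rw [← fixedSub_zpowers]
  exact ⟨hA.2.2.1, hA.index_fixedSub_eq_card hno hD₀⟩

theorem exists_isOverOffender_of_index_lt [Finite G] (C : Subgroup G) (hC : IsPGroup p C)
    (hcomm : ∀ x ∈ C, ∀ y ∈ C, x * y = y * x) (hD₀C : D₀ ≤ fixedSub G D C)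
    (hlt : D₀.index < Nat.card C * D₀.relIndex (fixedSub G D C)) :
    ∃ A : Subgroup G, IsOverOffender p D₀ A := by
  -- a subgroup of `C` maximizing `|B| · |C_D(B) : D₀|` is a best offender
  obtain ⟨B, hBC, hBmax⟩ := Set.exists_max_image {B : Subgroup G | B ≤ C}
    (fun B : Subgroup G => Nat.card B * D₀.relIndex (fixedSub G D B)) (Set.toFinite _)
    ⟨C, le_refl C⟩
  refine ⟨B, ⟨hC.to_le hBC, fun x hx y hy => hcomm x (hBC hx) y (hBC hy),
    hD₀C.trans (fixedSub_antitone hBC), fun B' hB' => hBmax B' (hB'.trans hBC)⟩,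
    hlt.trans_le (hBmax C (le_refl C))⟩

end Offenders

section Involutions

variable {M : Type*} [Group M] {u v : M}

theorem mul_ne_one_of_mul_self (hu : u * u = 1) (huv : u ≠ v) : u * v ≠ 1 :=
  fun h => huv (mul_left_cancel (h.trans hu.symm)).symm

theorem ncard_triple_mul (hu1 : u ≠ 1) (hv1 : v ≠ 1) (huv : u ≠ v) :
    ({u, v, u * v} : Set M).ncard = 3 :=
  Set.ncard_eq_three.mpr ⟨u, v, u * v, huv, fun h => hv1 (mul_eq_left.mp h.symm),
    fun h => hu1 (mul_eq_right.mp h.symm), rfl⟩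

variable (huv : Commute u v) (hu : u * u = 1) (hv : v * v = 1)
include huv hu hv

theorem mem_closure_pair_iff_of_commute {x : M} :
    x ∈ Subgroup.closure {u, v} ↔ x = 1 ∨ x = u ∨ x = v ∨ x = u * v := by
  refine ⟨fun hx => ?_, ?_⟩
  · have hu' : ∀ y, u * (u * y) = y := fun y => by rw [← mul_assoc, hu, one_mul]
    have hvu : ∀ y, v * (u * y) = u * (v * y) := fun y => by
      rw [← mul_assoc, ← huv.eq, mul_assoc]
    induction hx using Subgroup.closure_induction with
    | mem y hy => rcases hy with rfl | rfl <;> simp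
    | one => simp
    | mul y z _ _ hy hz =>
      rcases hy with h | h | h | h <;> rcases hz with h' | h' | h' | h' <;>
        simp [h, h', mul_assoc, hu, hv, hu', hvu, huv.eq.symm]
    | inv y _ hy =>
      rcases hy with h | h | h | h <;>
        simp [h, inv_eq_of_mul_eq_one_right hu, inv_eq_of_mul_eq_one_right hv, huv.eq.symm]
  · have hu_mem : u ∈ Subgroup.closure {u, v} := Subgroup.subset_closure (by simp)
    have hv_mem : v ∈ Subgroup.closure {u, v} := Subgroup.subset_closure (by simp)
    rintro (rfl | rfl | rfl | rfl)
    exacts [one_mem _, hu_mem, hv_mem, mul_mem hu_mem hv_mem]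

theorem card_closure_pair_of_commute (hu1 : u ≠ 1) (hv1 : v ≠ 1) (huv1 : u ≠ v) :
    Nat.card (Subgroup.closure {u, v}) = 4 := by
  have hset : (Subgroup.closure {u, v} : Set M) = insert 1 {u, v, u * v} := by
    ext x
    simp [mem_closure_pair_iff_of_commute huv hu hv]
  have h1 : (1 : M) ∉ ({u, v, u * v} : Set M) := by
    simp [hu1.symm, hv1.symm, (mul_ne_one_of_mul_self hu huv1).symm]
  rw [← SetLike.coe_sort_coe, Nat.card_coe_set_eq, hset, Set.ncard_insert_of_notMem h1,
    ncard_triple_mul hu1 hv1 huv1]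

theorem mul_self_eq_one_of_mem_closure_pair {x : M} (hx : x ∈ Subgroup.closure {u, v}) :
    x * x = 1 := by
  rcases (mem_closure_pair_iff_of_commute huv hu hv).mp hx with rfl | rfl | rfl | rfl
  · exact mul_one 1
  · exact hu
  · exact hv
  · rw [mul_assoc, ← mul_assoc v, ← huv.eq, mul_assoc, hv, mul_one, hu]

theorem commute_of_mem_closure_pair {x y : M} (hx : x ∈ Subgroup.closure {u, v})
    (hy : y ∈ Subgroup.closure {u, v}) : Commute x y := by
  have hxy := mul_self_eq_one_of_mem_closure_pair huv hu hv (mul_mem hx hy)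
  rw [Commute, SemiconjBy, ← inv_eq_of_mul_eq_one_right hxy, mul_inv_rev,
    inv_eq_of_mul_eq_one_right (mul_self_eq_one_of_mem_closure_pair huv hu hv hx),
    inv_eq_of_mul_eq_one_right (mul_self_eq_one_of_mem_closure_pair huv hu hv hy)]

end Involutions

section Transvections

variable {G D : Type*} [Group G] [CommGroup D] [MulDistribMulAction G D]

/-- `g` acts on `D` as a transvection with centre `z`, i.e. `[D, g] = {1, z}` has order `2`. -/
structure IsTransvection (g : G) (z : D) : Prop where
  center_ne_one : z ≠ 1
  smul_eq_or : ∀ d : D, g • d = d ∨ g • d = d * z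
  exists_smul_eq : ∃ d : D, g • d = d * z

namespace IsTransvection

variable {a b : G} {za zb : D}

theorem exists_of_index_fixedSub_eq_two {g : G} (h : (fixedSub G D {g}).index = 2) :
    ∃ z : D, IsTransvection g z := by
  let φ : D →* D := MulDistribMulAction.toMonoidHom D g / MonoidHom.id D
  have hφ : ∀ d, φ d = g • d / d := fun _ => rfl
  have hker : φ.ker = fixedSub G D {g} := by
    ext d
    simp [hφ, fixedSub, div_eq_one]
  have hcard : Nat.card φ.range = 2 := by rw [← Subgroup.index_ker, hker, h]
  obtain ⟨⟨z, hz⟩, hz1, hzuniq⟩ := (Nat.card_eq_two_iff' 1).mp hcard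
  have hz1 : z ≠ 1 := fun h => hz1 (Subtype.ext h)
  refine ⟨z, hz1, fun d => ?_, ?_⟩
  · by_cases hd : φ d = 1
    · exact .inl (div_eq_one.mp hd)
    · have := hzuniq ⟨φ d, d, rfl⟩ fun h => hd (congrArg Subtype.val h)
      exact .inr (by rw [← div_eq_iff_eq_mul', ← hφ]; exact congrArg Subtype.val this)
  · obtain ⟨d, rfl⟩ := hz
    exact ⟨d, by rw [hφ, mul_div_cancel]⟩

theorem mul_self (ha : IsTransvection a za) : za * za = 1 := by
  obtain ⟨d, hd⟩ := ha.exists_smul_eq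
  rcases ha.smul_eq_or (d * d) with h | h <;> rw [smul_mul', hd, mul_mul_mul_comm] at h
  · exact mul_eq_left.mp h
  · exact absurd (mul_eq_left.mp (mul_left_cancel h)) ha.center_ne_one

theorem mul_self_cancel (ha : IsTransvection a za) (x : D) : za * (za * x) = x := by
  rw [← mul_assoc, ha.mul_self, one_mul]

theorem smul_center (ha : IsTransvection a za) : a • za = za := by
  refine (ha.smul_eq_or za).resolve_right fun h => ha.center_ne_one ?_
  rw [ha.mul_self, ← smul_one a] at h
  exact smul_left_cancel a h

theorem ne_one (ha : IsTransvection a za) : a ≠ 1 := by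
  rintro rfl
  obtain ⟨d, hd⟩ := ha.exists_smul_eq
  exact ha.center_ne_one (mul_eq_left.mp (one_smul G d ▸ hd).symm)

theorem center_unique (ha : IsTransvection a za) (ha' : IsTransvection a zb) : za = zb := by
  obtain ⟨d, hd⟩ := ha.exists_smul_eq
  rcases ha'.smul_eq_or d with h | h <;> rw [hd] at h
  · exact absurd (mul_eq_left.mp h) ha.center_ne_one
  · exact mul_left_cancel h

theorem ne_center_of_smul_eq_mul (hb : IsTransvection b zb) {z : D} (h : b • z = z * zb) :
    z ≠ zb := by
  rintro rfl
  rw [hb.smul_center] at h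
  exact hb.center_ne_one (mul_eq_left.mp h.symm)

theorem smul_center_mul_left (ha : IsTransvection a za) (hazb : a • zb = zb * za) :
    a • (za * zb) = zb := by
  rw [smul_mul', ha.smul_center, hazb, mul_left_comm, ha.mul_self, mul_one]

theorem smul_center_mul_right (hb : IsTransvection b zb) (hbza : b • za = za * zb) :
    b • (za * zb) = za := by
  rw [smul_mul', hbza, hb.smul_center, mul_assoc, hb.mul_self, mul_one]

theorem center_mem_actComm (ha : IsTransvection a za) {S : Set G} (haS : a ∈ S) :
    za ∈ actComm G S ⊤ := by
  obtain ⟨d, hd⟩ := ha.exists_smul_eq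
  exact Subgroup.subset_closure ⟨d, Subgroup.mem_top d, a, haS, by rw [hd, inv_mul_cancel_left]⟩

theorem inv_mul_smul_mem (ha : IsTransvection a za) {V : Subgroup D} (hV : za ∈ V) (d : D) :
    d⁻¹ * a • d ∈ V := by
  rcases ha.smul_eq_or d with h | h <;> rw [h]
  · rw [inv_mul_cancel]
    exact one_mem V
  · rwa [inv_mul_cancel_left]

theorem actComm_closure_pair (ha : IsTransvection a za) (hb : IsTransvection b zb) :
    actComm G (Subgroup.closure {a, b}) ⊤ = Subgroup.closure {za, zb} := by
  have hza : za ∈ Subgroup.closure {za, zb} := Subgroup.subset_closure (by simp)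
  have hzb : zb ∈ Subgroup.closure {za, zb} := Subgroup.subset_closure (by simp)
  refine le_antisymm (actComm_closure_le ?_) ((Subgroup.closure_le _).mpr ?_)
  · rintro g (rfl | rfl)
    exacts [ha.inv_mul_smul_mem hza, hb.inv_mul_smul_mem hzb]
  · rintro z (rfl | rfl)
    exacts [ha.center_mem_actComm (Subgroup.subset_closure (by simp)),
      hb.center_mem_actComm (Subgroup.subset_closure (by simp))]

theorem mul_sq (ha : IsTransvection a za) (hb : IsTransvection b zb)
    (hazb : a • zb = zb) (hbza : b • za = za * zb) :
    IsTransvection ((a * b) ^ 2) zb ∧ fixedSub G D {a} ≤ fixedSub G D {(a * b) ^ 2} := by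
  have key : ∀ d, (a • d = d → (a * b) ^ 2 • d = d) ∧
      (a • d = d * za → (a * b) ^ 2 • d = d * zb) := by
    intro d
    constructor <;> intro h1 <;> rcases hb.smul_eq_or d with h2 | h2 <;>
      simp [pow_succ, mul_smul, smul_mul', h1, h2, hazb, hbza, ha.smul_center, hb.smul_center,
        mul_comm, mul_left_comm, mul_assoc, ha.mul_self_cancel, hb.mul_self_cancel]
  refine ⟨⟨hb.center_ne_one, fun d => (ha.smul_eq_or d).imp (key d).1 (key d).2, ?_⟩, ?_⟩
  · obtain ⟨d, hd⟩ := ha.exists_smul_eq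
    exact ⟨d, (key d).2 hd⟩
  · intro d hd g hg
    rw [Set.mem_singleton_iff.mp hg]
    exact (key d).1 (hd a rfl)

variable [FaithfulSMul G D]

theorem mul_self_eq_one (ha : IsTransvection a za) : a * a = 1 :=
  FaithfulSMul.eq_of_smul_eq_smul fun d => by
    rcases ha.smul_eq_or d with h | h <;>
      simp [mul_smul, smul_mul', h, ha.smul_center, mul_assoc, ha.mul_self]

theorem commute (ha : IsTransvection a za) (hb : IsTransvection b zb)
    (hazb : a • zb = zb) (hbza : b • za = za) : Commute a b :=
  FaithfulSMul.eq_of_smul_eq_smul fun d => by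
    rcases ha.smul_eq_or d with h1 | h1 <;> rcases hb.smul_eq_or d with h2 | h2 <;>
      simp [mul_smul, smul_mul', h1, h2, hazb, hbza, mul_right_comm]

theorem mul_pow_three (ha : IsTransvection a za) (hb : IsTransvection b zb)
    (hazb : a • zb = zb * za) (hbza : b • za = za * zb) : (a * b) ^ 3 = 1 :=
  FaithfulSMul.eq_of_smul_eq_smul fun d => by
    rcases ha.smul_eq_or d with h1 | h1 <;> rcases hb.smul_eq_or d with h2 | h2 <;>
      simp [pow_succ, mul_smul, smul_mul', h1, h2, hazb, hbza, ha.smul_center, hb.smul_center,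
        mul_comm, mul_left_comm, mul_assoc, ha.mul_self_cancel, hb.mul_self_cancel]

theorem exists_isOverOffender [Finite G] {D₀ : Subgroup D} (ha : IsTransvection a za)
    (hb : IsTransvection b zb) (hazb : a • zb = zb) (hbza : b • za = za * zb)
    (hD₀a : D₀ ≤ fixedSub G D {a}) (hidx : (fixedSub G D {a}).index = 2) (hD₀ : D₀.index ≠ 0) :
    ∃ A : Subgroup G, IsOverOffender 2 D₀ A := by
  obtain ⟨hc, hac⟩ := ha.mul_sq hb hazb hbza
  set c := (a * b) ^ 2
  have hcomm : Commute a c := ha.commute hc hazb (hac (fun _ hg => by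
    rw [Set.mem_singleton_iff.mp hg, ha.smul_center]) c rfl)
  have hne : a ≠ c := fun h => hb.ne_center_of_smul_eq_mul hbza (ha.center_unique (h ▸ hc))
  have haa := ha.mul_self_eq_one
  have hcc := hc.mul_self_eq_one
  -- `⟨a, c⟩` is a four-group with the same fixed points as `a`, so it doubles the value of `⟨a⟩`
  have hfix : fixedSub G D (Subgroup.closure {a, c}) = fixedSub G D {a} := by
    rw [fixedSub_closure]
    exact le_antisymm (fixedSub_antitone (by simp))
      fun x hx => mem_fixedSub_pair.mpr ⟨hx a rfl, hac hx c rfl⟩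
  have hK : IsPGroup 2 (Subgroup.closure {a, c}) := fun g => ⟨1, Subtype.ext <| by
    simpa [pow_two] using mul_self_eq_one_of_mem_closure_pair hcomm haa hcc g.2⟩
  have hrel := Subgroup.relIndex_mul_index hD₀a
  rw [hidx] at hrel
  refine exists_isOverOffender_of_index_lt _ hK
    (fun x hx y hy => commute_of_mem_closure_pair hcomm haa hcc hx hy) (hfix ▸ hD₀a) ?_
  rw [hfix, card_closure_pair_of_commute hcomm haa hcc ha.ne_one hc.ne_one hne, ← hrel]
  have : D₀.relIndex (fixedSub G D {a}) ≠ 0 := fun h => hD₀ (by rw [← hrel, h, zero_mul])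
  omega

theorem smul_center_eq_mul [Finite G] {D₀ : Subgroup D}
    (hno : ∀ A : Subgroup G, ¬ IsOverOffender 2 D₀ A) (hD₀ : D₀.index ≠ 0)
    (hD₀b : D₀ ≤ fixedSub G D {b}) (hidx : (fixedSub G D {b}).index = 2)
    (ha : IsTransvection a za) (hb : IsTransvection b zb) (hab : ¬ Commute a b) :
    b • za = za * zb := by
  refine (hb.smul_eq_or za).resolve_left fun hbza => ?_
  rcases ha.smul_eq_or zb with hazb | hazb
  · exact hab (ha.commute hb hazb hbza)
  · obtain ⟨A, hA⟩ := hb.exists_isOverOffender ha hbza hazb hD₀b hidx hD₀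
    exact hno A hA

end IsTransvection

end Transvections

namespace IsTransvection

variable {G D : Type*} [Group G] [CommGroup D] [MulDistribMulAction G D] {a b : G} {za zb : D}
  (ha : IsTransvection a za) (hb : IsTransvection b zb)
  (hazb : a • zb = zb * za) (hbza : b • za = za * zb)
include ha hb hazb hbza

theorem closure_centers_inf_fixedSub_eq_bot :
    Subgroup.closure {za, zb} ⊓ fixedSub G D (Subgroup.closure {a, b}) = ⊥ := by
  refine (Subgroup.eq_bot_iff_forall _).mpr fun x hx => ?_
  obtain ⟨hxV, hxC⟩ := Subgroup.mem_inf.mp hx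
  rw [fixedSub_closure, mem_fixedSub_pair] at hxC
  rcases (mem_closure_pair_iff_of_commute (Commute.all za zb) ha.mul_self hb.mul_self).mp hxV
    with rfl | rfl | rfl | rfl
  · rfl
  · rw [hbza] at hxC
    exact absurd (mul_eq_left.mp hxC.2) hb.center_ne_one
  · rw [hazb] at hxC
    exact absurd (mul_eq_left.mp hxC.1) ha.center_ne_one
  · rw [ha.smul_center_mul_left hazb] at hxC
    exact absurd (mul_eq_right.mp hxC.1.symm) ha.center_ne_one

theorem closure_centers_sup_fixedSub_eq_top :
    Subgroup.closure {za, zb} ⊔ fixedSub G D (Subgroup.closure {a, b}) = ⊤ := by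
  have hza : za ∈ Subgroup.closure {za, zb} := Subgroup.subset_closure (by simp)
  have hzb : zb ∈ Subgroup.closure {za, zb} := Subgroup.subset_closure (by simp)
  have key : ∀ d : D, ∃ v ∈ Subgroup.closure {za, zb}, d * v ∈ fixedSub G D {a, b} := by
    intro d
    simp only [mem_fixedSub_pair, smul_mul']
    rcases ha.smul_eq_or d with h1 | h1 <;> rcases hb.smul_eq_or d with h2 | h2
    · exact ⟨1, one_mem _, by simp [h1, h2]⟩
    · refine ⟨za, hza, ?_⟩
      rw [h1, h2, ha.smul_center, hbza]
      simp [mul_comm, mul_left_comm, hb.mul_self_cancel]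
    · refine ⟨zb, hzb, ?_⟩
      rw [h1, h2, hb.smul_center, hazb]
      simp [mul_comm, mul_left_comm, ha.mul_self_cancel]
    · refine ⟨za * zb, mul_mem hza hzb, ?_⟩
      rw [h1, h2, ha.smul_center_mul_left hazb, hb.smul_center_mul_right hbza]
      simp [mul_comm, mul_left_comm]
  refine eq_top_iff.mpr fun d _ => ?_
  obtain ⟨v, hv, hdv⟩ := key d
  rw [← fixedSub_closure] at hdv
  exact Subgroup.mem_sup.mpr ⟨v⁻¹, inv_mem hv, d * v, hdv, by rw [mul_comm, mul_inv_cancel_right]⟩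

theorem nonempty_mulEquiv_perm_fin_three [FaithfulSMul G D] :
    Nonempty (Subgroup.closure {a, b} ≃* Equiv.Perm (Fin 3)) := by
  set L := Subgroup.closure {a, b}
  set Z : Set D := {za, zb, za * zb}
  have hzz := hb.ne_center_of_smul_eq_mul hbza
  have hZ : Nat.card Z = 3 := by
    rw [Nat.card_coe_set_eq, ncard_triple_mul ha.center_ne_one hb.center_ne_one hzz]
  have hLZ : L ≤ MulAction.stabilizer G Z := by
    refine (Subgroup.closure_le _).mpr ?_
    rintro g (rfl | rfl) <;>
      refine (MulAction.mem_stabilizer_set_iff_smul_set_subset (Set.toFinite Z)).mpr ?_ <;>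
      simp [Set.smul_set_subset_iff, Z, hazb, hbza, ha.smul_center, hb.smul_center,
        ha.smul_center_mul_left hazb, hb.smul_center_mul_right hbza, mul_comm]
  let ψ : L →* Equiv.Perm Z := (MulAction.toPermHom _ Z).comp (Subgroup.inclusion hLZ)
  have hψ : Function.Injective ψ := by
    refine (injective_iff_map_eq_one ψ).mpr fun g hg =>
      Subtype.ext (eq_one_of_fixedSub_eq_top (D := D) ?_)
    have hfix : ∀ z ∈ Z, (g : G) • z = z := fun z hz =>
      congrArg Subtype.val (DFunLike.congr_fun hg (⟨z, hz⟩ : Z))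
    rw [eq_top_iff, ← closure_centers_sup_fixedSub_eq_top ha hb hazb hbza]
    refine sup_le ((Subgroup.closure_le _).mpr ?_) (fixedSub_antitone (by simp))
    rintro z (rfl | rfl) _ rfl
    exacts [hfix _ (by simp [Z]), hfix _ (by simp [Z])]
  have h6 : 6 ∣ Nat.card L := by
    have haL : a ∈ L := Subgroup.subset_closure (by simp)
    have hbL : b ∈ L := Subgroup.subset_closure (by simp)
    have h2 : orderOf a = 2 := orderOf_eq_prime (by rw [pow_two, ha.mul_self_eq_one]) ha.ne_one
    have h3 : orderOf (a * b) = 3 := orderOf_eq_prime (ha.mul_pow_three hb hazb hbza) fun h =>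
      hzz (by rw [← ha.smul_center_mul_left hazb, ← hbza, ← mul_smul, h, one_smul])
    refine Nat.Coprime.mul_dvd_of_dvd_of_dvd (by norm_num : Nat.Coprime 2 3) ?_ ?_
    · exact h2 ▸ L.orderOf_dvd_natCard haL
    · exact h3 ▸ L.orderOf_dvd_natCard (mul_mem haL hbL)
  have : Finite L := Finite.of_injective ψ hψ
  have hcard : Nat.card L = Nat.card (Equiv.Perm Z) := by
    have := Nat.card_le_card_of_injective ψ hψ
    rw [Nat.card_perm, hZ] at this ⊢
    exact le_antisymm this (Nat.le_of_dvd Nat.card_pos h6)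
  obtain ⟨e⟩ : Nonempty (Z ≃ Fin 3) := Finite.card_eq.mp (by rw [hZ, Nat.card_fin])
  exact ⟨(MulEquiv.ofBijective ψ ((Nat.bijective_iff_injective_and_card ψ).mpr
    ⟨hψ, hcard⟩)).trans e.permCongrHom⟩

end IsTransvection

/-- Suppose the finite group `G` acts faithfully on the abelian
discrete `2`-toral group `D` with no over-offenders, and `A`, `B` are non-commuting
best offenders of order `2`.  Then `L = ⟨A,B⟩ ≅ S₃`, `[D,L]` is elementary abelian
of order `4`, and `D = [D,L] × C_D(L)`. -/
theorem noncommuting_best_offenders_sym3 {G D : Type*} [Group G] [Finite G]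
    [CommGroup D] [MulDistribMulAction G D] [FaithfulSMul G D]
    (hD : IsDiscretePToral 2 D) (D₀ : Subgroup D) (hD₀ : IsMaxDivisible D₀)
    (hno : ∀ A' : Subgroup G, ¬ IsOverOffender 2 D₀ A')
    (A B : Subgroup G) (hA : IsBestOffender 2 D₀ A) (hB : IsBestOffender 2 D₀ B)
    (hcA : Nat.card A = 2) (hcB : Nat.card B = 2)
    (hncomm : ∃ a ∈ A, ∃ b ∈ B, a * b ≠ b * a) :
    Nonempty (↥(A ⊔ B : Subgroup G) ≃* Equiv.Perm (Fin 3)) ∧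
      (Nat.card ↥(actComm G ((A ⊔ B : Subgroup G) : Set G) (⊤ : Subgroup D)) = 4 ∧
        ∀ x ∈ actComm G ((A ⊔ B : Subgroup G) : Set G) (⊤ : Subgroup D), x ^ 2 = 1) ∧
      (actComm G ((A ⊔ B : Subgroup G) : Set G) (⊤ : Subgroup D) ⊓
          fixedSub G D (((A ⊔ B : Subgroup G)) : Set G) = ⊥ ∧
        actComm G ((A ⊔ B : Subgroup G) : Set G) (⊤ : Subgroup D) ⊔
          fixedSub G D (((A ⊔ B : Subgroup G)) : Set G) = ⊤) := by
  have hD₀idx := hD.index_ne_zero Nat.prime_two hD₀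
  obtain ⟨a, rfl⟩ := A.isCyclic_iff_exists_zpowers_eq_top.mp (isCyclic_of_prime_card hcA)
  obtain ⟨b, rfl⟩ := B.isCyclic_iff_exists_zpowers_eq_top.mp (isCyclic_of_prime_card hcB)
  have hab : ¬ Commute a b := by
    obtain ⟨_, ⟨m, rfl⟩, _, ⟨n, rfl⟩, hne⟩ := hncomm
    exact fun h => hne (h.zpow_zpow m n).eq
  obtain ⟨haD₀, ha2⟩ := hA.le_fixedSub_and_index_eq_card (hno _) hD₀idx
  obtain ⟨hbD₀, hb2⟩ := hB.le_fixedSub_and_index_eq_card (hno _) hD₀idx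
  rw [hcA] at ha2
  rw [hcB] at hb2
  obtain ⟨za, ha⟩ := IsTransvection.exists_of_index_fixedSub_eq_two ha2
  obtain ⟨zb, hb⟩ := IsTransvection.exists_of_index_fixedSub_eq_two hb2
  have hbza := IsTransvection.smul_center_eq_mul hno hD₀idx hbD₀ hb2 ha hb hab
  have hazb := IsTransvection.smul_center_eq_mul hno hD₀idx haD₀ ha2 hb ha (mt Commute.symm hab)
  have hV := Commute.all za zb
  rw [Subgroup.zpowers_eq_closure, Subgroup.zpowers_eq_closure, ← Subgroup.closure_union,
    Set.singleton_union, ha.actComm_closure_pair hb]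
  refine ⟨ha.nonempty_mulEquiv_perm_fin_three hb hazb hbza, ⟨?_, fun x hx => ?_⟩,
    ha.closure_centers_inf_fixedSub_eq_bot hb hazb hbza,
    ha.closure_centers_sup_fixedSub_eq_top hb hazb hbza⟩
  · exact card_closure_pair_of_commute hV ha.mul_self hb.mul_self ha.center_ne_one
      hb.center_ne_one (hb.ne_center_of_smul_eq_mul hbza)
  · exact (pow_two x).trans (mul_self_eq_one_of_mem_closure_pair hV ha.mul_self hb.mul_self hx)
end
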